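/- For every incidence graph I ∈ IEHW_k there exist an entangled hypertree decomposition D = (T, Bag, Cover) of I and a tree-node ω ∈ V(T) with |Cover(ω)| ≤ k such that the tree T rooted at ω is binary (every node has at most two children) and monotone (for every parent-child pair (t_p, t_c) in the rooted tree, |Cover(t_p)| ≥ |Cover(t_c)|). -/

import Mathlib

set_option autoImplicit false

noncomputable section

/-! ### Incidence graphs -/

/-- An incidence graph: finite sets of red nodes and blue nodes (realised as two
disjoint finite types), edges from blue nodes to red nodes, every red node adjacent
to at least one blue node. -/
structure IncGraph where
  R : Type
  B : Type
  [finR : Finite R]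
  [finB : Finite B]
  E : B → R → Prop
  covered : ∀ v : R, ∃ e : B, E e v

attribute [instance] IncGraph.finR IncGraph.finB

/-- The neighbourhood of a blue node. -/
def IncGraph.nbhd (I : IncGraph) (e : I.B) : Set I.R := {v | I.E e v}

/-- Homomorphisms between incidence graphs. -/
def IncHom (J I : IncGraph) : Type :=
  {h : (J.R → I.R) × (J.B → I.B) // ∀ e v, J.E e v → I.E (h.2 e) (h.1 v)}

/-- The number of homomorphisms between incidence graphs. -/
def homCount (J I : IncGraph) : ℕ := Nat.card (IncHom J I)

/-- Homomorphism indistinguishability over a class of incidence graphs. -/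
def HomIndist (C : Set IncGraph) (I I' : IncGraph) : Prop :=
  ∀ J ∈ C, homCount J I = homCount J I'

/-- Isomorphism of incidence graphs. -/
def IncIso (I I' : IncGraph) : Prop :=
  ∃ (πR : I.R ≃ I'.R) (πB : I.B ≃ I'.B), ∀ e v, I.E e v ↔ I'.E (πB e) (πR v)

/-! ### Hypergraphs -/

structure HypGraph where
  V : Type
  Edge : Type
  [finV : Finite V]
  [finE : Finite Edge]
  f : Edge → Set V
  covered : ∀ v : V, ∃ e : Edge, v ∈ f e

attribute [instance] HypGraph.finV HypGraph.finE

/-- A hypergraph is simple if its incidence function is injective. -/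
def HypGraph.Simple (H : HypGraph) : Prop := Function.Injective H.f

/-- The incidence graph of a hypergraph. -/
def HypGraph.inc (H : HypGraph) : IncGraph where
  R := H.V
  B := H.Edge
  E := fun e v => v ∈ H.f e
  covered := H.covered

/-- Homomorphisms between hypergraphs. -/
def HypHom (F H : HypGraph) : Type :=
  {h : (F.V → H.V) × (F.Edge → H.Edge) // ∀ e, H.f (h.2 e) = h.1 '' F.f e}

/-- The number of homomorphisms between hypergraphs. -/
def hhomCount (F H : HypGraph) : ℕ := Nat.card (HypHom F H)

/-- Homomorphism indistinguishability over a class of hypergraphs. -/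
def HypHomIndist (C : Set HypGraph) (H H' : HypGraph) : Prop :=
  ∀ F ∈ C, hhomCount F H = hhomCount F H'

/-! ### Hypertree decompositions -/

/-- A complete generalised hypertree decomposition of an incidence graph. -/
structure GHD (I : IncGraph) where
  T : Type
  [finT : Finite T]
  tr : SimpleGraph T
  isTree : tr.IsTree
  Bag : T → Set I.R
  Cover : T → Set I.B
  complete : ∀ e : I.B, ∃ t, I.nbhd e ⊆ Bag t ∧ e ∈ Cover t
  connR : ∀ v : I.R, (tr.induce {t | v ∈ Bag t}).Connected
  covering : ∀ t, Bag t ⊆ ⋃ e ∈ Cover t, I.nbhd e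

attribute [instance] GHD.finT

/-- The decomposition has width at most `k`. -/
def GHD.widthLe {I : IncGraph} (D : GHD I) (k : ℕ) : Prop :=
  ∀ t, (D.Cover t).ncard ≤ k

/-- An entangled hypertree decomposition. -/
structure EHD (I : IncGraph) extends GHD I where
  precise : ∀ t, (⋃ e ∈ Cover t, I.nbhd e) = Bag t
  connB : ∀ e : I.B, (tr.induce {t | e ∈ Cover t}).Connected

/-- Incidence graphs of generalised hypertree width at most `k`. -/
def IGHW (k : ℕ) : Set IncGraph := {I | ∃ D : GHD I, D.widthLe k}

/-- Incidence graphs of entangled hypertree width at most `k`. -/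
def IEHW (k : ℕ) : Set IncGraph := {I | ∃ D : EHD I, D.toGHD.widthLe k}

/-- Hypergraphs of generalised hypertree width at most `k`. -/
def GHWclass (k : ℕ) : Set HypGraph := {H | H.inc ∈ IGHW k}

/-- Simple hypergraphs of generalised hypertree width at most `k`. -/
def SGHWclass (k : ℕ) : Set HypGraph := {H | H.Simple ∧ H.inc ∈ IGHW k}

/-- Adding `n` fresh blue nodes whose neighbourhood is exactly `s`. -/
def IncGraph.addBlue (J : IncGraph) (s : Set J.R) (n : ℕ) : IncGraph where
  R := J.R
  B := J.B ⊕ Fin n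
  E := fun e v => Sum.elim (fun e₁ => J.E e₁ v) (fun _ => v ∈ s) e
  covered := fun v => by
    obtain ⟨e, he⟩ := J.covered v
    exact ⟨Sum.inl e, he⟩

/-! ### Guard functions -/

/-- A guard function: a partial map from red-variable indices to `[k]`
with finite domain. -/
structure GuardF (k : ℕ) where
  f : ℕ → Option (Fin k)
  fin : {i | (f i).isSome}.Finite

namespace GuardF

variable {k : ℕ}

/-- The domain of a guard function. -/
def dom (g : GuardF k) : Finset ℕ := g.fin.toFinset

open Classical in
/-- The image of a guard function. -/
def img (g : GuardF k) : Finset (Fin k) :=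
  Finset.univ.filter fun j => ∃ i, g.f i = some j

theorem mem_dom {g : GuardF k} {i : ℕ} : i ∈ g.dom ↔ (g.f i).isSome := by
  simp [dom, Set.Finite.mem_toFinset]

theorem mem_img {g : GuardF k} {j : Fin k} : j ∈ g.img ↔ ∃ i, g.f i = some j := by
  classical
  simp [img]

/-- Union of two guard functions (the first takes precedence). -/
def union (g₁ g₂ : GuardF k) : GuardF k where
  f := fun i => (g₁.f i).or (g₂.f i)
  fin := by
    apply (g₁.fin.union g₂.fin).subset
    intro i hi
    simp only [Set.mem_setOf_eq, Option.isSome_or, Bool.or_eq_true] at hi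
    exact hi

/-- Removing a set of indices from the domain of a guard function. -/
def remove (g : GuardF k) (s : Finset ℕ) : GuardF k where
  f := fun i => if i ∈ s then none else g.f i
  fin := by
    apply g.fin.subset
    intro i hi
    simp only [Set.mem_setOf_eq] at hi ⊢
    by_cases h : i ∈ s
    · simp [h] at hi
    · simpa [h] using hi

/-- Two guard functions are compatible if they agree on the intersection
of their domains. -/
def Compatible (g₁ g₂ : GuardF k) : Prop :=
  ∀ i j₁ j₂, g₁.f i = some j₁ → g₂.f i = some j₂ → j₁ = j₂

/-- `f` is a transition for `g`. -/
def IsTransition (g f : GuardF k) : Prop :=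
  f.dom.Nonempty ∧ (∀ i, (f.f i).isSome → (g.f i).isSome) ∧
    ∀ i j, g.f i = some j → j ∈ f.img → (f.f i).isSome

/-- `g ⊆ g'` for guard functions. -/
def le (g g' : GuardF k) : Prop := ∀ i j, g.f i = some j → g'.f i = some j

end GuardF

/-! ### The logic GC^k -/

/-- Raw syntax of the two-sorted counting logic with guards. Quantifiers carry
the guard function used to guard the quantified formula. -/
inductive Fml (k : ℕ) : Type where
  | top : Fml k
  | E (j : Fin k) (i : ℕ) : Fml k
  | beq (j j' : Fin k) : Fml k
  | req (i i' : ℕ) : Fml k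
  | not (ψ : Fml k) : Fml k
  | and (ψ₁ ψ₂ : Fml k) : Fml k
  | exR (n : ℕ) (s : Finset ℕ) (g : GuardF k) (ψ : Fml k) : Fml k
  | exB (n : ℕ) (s : Finset (Fin k)) (g : GuardF k) (ψ : Fml k) : Fml k

/-- Indices of free red variables of a formula.  For the quantified formulas the
quantified body is `(α_g ∧ ψ)`. -/
def freeR {k : ℕ} : Fml k → Finset ℕ
  | .top => ∅
  | .E _ i => {i}
  | .beq _ _ => ∅
  | .req i i' => {i, i'}
  | .not ψ => freeR ψ
  | .and ψ₁ ψ₂ => freeR ψ₁ ∪ freeR ψ₂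
  | .exR _ s g ψ => (g.dom ∪ freeR ψ) \ s
  | .exB _ _ g ψ => g.dom ∪ freeR ψ

/-- Indices of free blue variables of a formula. -/
def freeB {k : ℕ} : Fml k → Finset (Fin k)
  | .top => ∅
  | .E j _ => {j}
  | .beq j j' => {j, j'}
  | .req _ _ => ∅
  | .not ψ => freeB ψ
  | .and ψ₁ ψ₂ => freeB ψ₁ ∪ freeB ψ₂
  | .exR _ _ g ψ => g.img ∪ freeB ψ
  | .exB _ s g ψ => (g.img ∪ freeB ψ) \ s

/-- Updating a red assignment on the variables in `s`. -/
def updR {R : Type} (βR : ℕ → R) (s : Finset ℕ) (a : ↥s → R) : ℕ → R :=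
  fun i => if h : i ∈ s then a ⟨i, h⟩ else βR i

/-- Updating a blue assignment on the variables in `s`. -/
def updB {k : ℕ} {B : Type} (βB : Fin k → B) (s : Finset (Fin k)) (a : ↥s → B) : Fin k → B :=
  fun j => if h : j ∈ s then a ⟨j, h⟩ else βB j

/-- Satisfaction of the guard formula `α_g` in an interpretation. -/
def GuardSat {k : ℕ} (I : IncGraph) (βB : Fin k → I.B) (βR : ℕ → I.R) (g : GuardF k) : Prop :=
  ∀ i j, g.f i = some j → I.E (βB j) (βR i)

/-- Satisfaction of a formula in an interpretation `(I, β)`. -/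
def FmlSat {k : ℕ} (I : IncGraph) : Fml k → (Fin k → I.B) → (ℕ → I.R) → Prop
  | Fml.top, _, _ => True
  | Fml.E j i, βB, βR => I.E (βB j) (βR i)
  | Fml.beq j j', βB, _ => βB j = βB j'
  | Fml.req i i', _, βR => βR i = βR i'
  | Fml.not ψ, βB, βR => ¬ FmlSat I ψ βB βR
  | Fml.and ψ₁ ψ₂, βB, βR => FmlSat I ψ₁ βB βR ∧ FmlSat I ψ₂ βB βR
  | Fml.exR n s g ψ, βB, βR =>
      n ≤ Nat.card {a : ↥s → I.R //
        GuardSat I βB (updR βR s a) g ∧ FmlSat I ψ βB (updR βR s a)}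
  | Fml.exB n s g ψ, βB, βR =>
      n ≤ Nat.card {a : ↥s → I.B //
        GuardSat I (updB βB s a) βR g ∧ FmlSat I ψ (updB βB s a) βR}

/-- The formulas of the logic `GC^k`. -/
inductive IsGC (k : ℕ) : Fml k → Prop
  | top : IsGC k Fml.top
  | E (j : Fin k) (i : ℕ) : IsGC k (Fml.E j i)
  | beq (j j' : Fin k) : IsGC k (Fml.beq j j')
  | req (i i' : ℕ) : IsGC k (Fml.req i i')
  | not {ψ : Fml k} : IsGC k ψ → IsGC k ψ.not
  | and {ψ₁ ψ₂ : Fml k} : IsGC k ψ₁ → IsGC k ψ₂ → IsGC k (ψ₁.and ψ₂)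
  | exR {ψ : Fml k} (n : ℕ) (s : Finset ℕ) (g : GuardF k) :
      IsGC k ψ → g.dom = freeR ψ → 1 ≤ n → s.Nonempty → s ⊆ g.dom →
      IsGC k (Fml.exR n s g ψ)
  | exB {ψ : Fml k} (n : ℕ) (s : Finset (Fin k)) (g : GuardF k) :
      IsGC k ψ → g.dom = freeR ψ → 1 ≤ n → s.Nonempty → s ⊆ g.img ∪ freeB ψ →
      IsGC k (Fml.exB n s g ψ)

/-- The normal form `NGC^k`: `NGC k g ψ` expresses that `(α_g ∧ ψ)` is a formula
of the fragment `NGC^k`. -/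
inductive NGC (k : ℕ) : GuardF k → Fml k → Prop
  | E {g : GuardF k} (j : Fin k) (i : ℕ) : g.dom = {i} → NGC k g (Fml.E j i)
  | beq {g : GuardF k} (j j' : Fin k) : g.dom = ∅ → NGC k g (Fml.beq j j')
  | req {g : GuardF k} (i i' : ℕ) : g.dom = {i, i'} → NGC k g (Fml.req i i')
  | not {g : GuardF k} {ψ : Fml k} : NGC k g ψ → NGC k g ψ.not
  | and {g₁ g₂ : GuardF k} {ψ₁ ψ₂ : Fml k} :
      NGC k g₁ ψ₁ → NGC k g₂ ψ₂ → GuardF.Compatible g₁ g₂ →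
      NGC k (g₁.union g₂) (ψ₁.and ψ₂)
  | exR {g : GuardF k} {ψ : Fml k} (n : ℕ) (s : Finset ℕ) :
      NGC k g ψ → 1 ≤ n → s.Nonempty → s ⊆ g.dom →
      NGC k (g.remove s) (Fml.exR n s g ψ)
  | exB {g g' : GuardF k} {ψ : Fml k} (n : ℕ) (s : Finset (Fin k)) :
      NGC k g ψ → 1 ≤ n → s.Nonempty → s ⊆ g.img ∪ freeB ψ →
      g'.dom = g.dom →
      (∀ i ∈ g.dom, ∃ j, g'.f i = some j ∧ (g.f i = some j ∨ j ∈ s ∨ j ∉ g.img)) →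
      NGC k g' (Fml.exB n s g ψ)

/-- Indistinguishability of two incidence graphs by sentences of `GC^k`. -/
def GCEquiv (k : ℕ) (I I' : IncGraph) : Prop :=
  ∀ φ : Fml k, IsGC k φ → freeR φ = ∅ → freeB φ = ∅ →
    ((∀ βB βR, FmlSat I φ βB βR) ↔ (∀ βB βR, FmlSat I' φ βB βR))

/-! ### k-labeled incidence graphs -/

/-- A `k`-labeled incidence graph. -/
structure KLI (k : ℕ) where
  I : IncGraph
  r : ℕ → Option I.R
  b : Fin k → Option I.B
  g : GuardF k
  fin_r : {i | (r i).isSome}.Finite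

namespace KLI

variable {k : ℕ}

/-- The set of red labels used. -/
def domR (L : KLI k) : Finset ℕ := L.fin_r.toFinset

/-- The set of blue labels used. -/
def domB (L : KLI k) : Finset (Fin k) := Finset.univ.filter fun j => (L.b j).isSome

/-- `L` has real guards with respect to the partial map `f`. -/
def realGuardsWrt (L : KLI k) (f : ℕ → Option (Fin k)) : Prop :=
  ∀ i j, f i = some j → ∃ v e, L.r i = some v ∧ L.b j = some e ∧ L.I.E e v

/-- `L` has real guards. -/
def realGuards (L : KLI k) : Prop := L.realGuardsWrt L.g.f

/-- Removing red labels. -/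
def removeR (L : KLI k) (X : Finset ℕ) : KLI k where
  I := L.I
  r := fun i => if i ∈ X then none else L.r i
  b := L.b
  g := L.g.remove X
  fin_r := by
    apply L.fin_r.subset
    intro i hi
    simp only [Set.mem_setOf_eq] at hi ⊢
    by_cases h : i ∈ X
    · simp [h] at hi
    · simpa [h] using hi

/-- Removing blue labels. -/
def removeB (L : KLI k) (X : Finset (Fin k)) : KLI k where
  I := L.I
  r := L.r
  b := fun j => if j ∈ X then none else L.b j
  g := L.g
  fin_r := L.fin_r

/-- Moving the red labels in `X` onto the nodes given by `a`. -/
def reseatR (L : KLI k) (X : Finset ℕ) (a : ↥X → L.I.R) : KLI k where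
  I := L.I
  r := fun i => if h : i ∈ X then some (a ⟨i, h⟩) else L.r i
  b := L.b
  g := L.g
  fin_r := by
    apply (L.fin_r.union X.finite_toSet).subset
    intro i hi
    simp only [Set.mem_setOf_eq] at hi
    by_cases h : i ∈ X
    · exact Or.inr (by simpa using h)
    · exact Or.inl (by simpa [h] using hi)

/-- Moving the blue labels in `X` onto the nodes given by `a`. -/
def reseatB (L : KLI k) (X : Finset (Fin k)) (a : ↥X → L.I.B) : KLI k where
  I := L.I
  r := L.r
  b := fun j => if h : j ∈ X then some (a ⟨j, h⟩) else L.b j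
  g := L.g
  fin_r := L.fin_r

/-- The identifications of red nodes when glueing. -/
def glueRelR (L₁ L₂ : KLI k) : (L₁.I.R ⊕ L₂.I.R) → (L₁.I.R ⊕ L₂.I.R) → Prop :=
  fun x y => ∃ i v₁ v₂, L₁.r i = some v₁ ∧ L₂.r i = some v₂ ∧ x = Sum.inl v₁ ∧ y = Sum.inr v₂

/-- The identifications of blue nodes when glueing. -/
def glueRelB (L₁ L₂ : KLI k) : (L₁.I.B ⊕ L₂.I.B) → (L₁.I.B ⊕ L₂.I.B) → Prop :=
  fun x y => ∃ j e₁ e₂, L₁.b j = some e₁ ∧ L₂.b j = some e₂ ∧ x = Sum.inl e₁ ∧ y = Sum.inr e₂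

/-- The incidence graph underlying the glueing of two labeled incidence graphs. -/
def glueIG (L₁ L₂ : KLI k) : IncGraph where
  R := Quot (glueRelR L₁ L₂)
  B := Quot (glueRelB L₁ L₂)
  finR := Finite.of_surjective (Quot.mk (glueRelR L₁ L₂))
    (fun q => Quot.inductionOn q fun a => ⟨a, rfl⟩)
  finB := Finite.of_surjective (Quot.mk (glueRelB L₁ L₂))
    (fun q => Quot.inductionOn q fun a => ⟨a, rfl⟩)
  E := fun e v =>
    (∃ e₁ v₁, L₁.I.E e₁ v₁ ∧ e = Quot.mk (glueRelB L₁ L₂) (Sum.inl e₁) ∧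
      v = Quot.mk (glueRelR L₁ L₂) (Sum.inl v₁)) ∨
    (∃ e₂ v₂, L₂.I.E e₂ v₂ ∧ e = Quot.mk (glueRelB L₁ L₂) (Sum.inr e₂) ∧
      v = Quot.mk (glueRelR L₁ L₂) (Sum.inr v₂))
  covered := by
    intro v
    induction v using Quot.ind with
    | _ x =>
      cases x with
      | inl v₁ =>
        obtain ⟨e₁, he⟩ := L₁.I.covered v₁
        exact ⟨Quot.mk (glueRelB L₁ L₂) (Sum.inl e₁), Or.inl ⟨e₁, v₁, he, rfl, rfl⟩⟩
      | inr v₂ =>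
        obtain ⟨e₂, he⟩ := L₂.I.covered v₂
        exact ⟨Quot.mk (glueRelB L₁ L₂) (Sum.inr e₂), Or.inr ⟨e₂, v₂, he, rfl, rfl⟩⟩

/-- Glueing two `k`-labeled incidence graphs. -/
def glue (L₁ L₂ : KLI k) : KLI k where
  I := glueIG L₁ L₂
  r := fun i =>
    match L₁.r i with
    | some v => some (Quot.mk (glueRelR L₁ L₂) (Sum.inl v))
    | none => (L₂.r i).map fun v => Quot.mk (glueRelR L₁ L₂) (Sum.inr v)
  b := fun j =>
    match L₁.b j with
    | some e => some (Quot.mk (glueRelB L₁ L₂) (Sum.inl e))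
    | none => (L₂.b j).map fun e => Quot.mk (glueRelB L₁ L₂) (Sum.inr e)
  g := L₁.g.union L₂.g
  fin_r := by
    apply (L₁.fin_r.union L₂.fin_r).subset
    intro i hi
    simp only [Set.mem_setOf_eq] at hi
    cases h₁ : L₁.r i with
    | some v => exact Or.inl (by simp [h₁])
    | none =>
      right
      rw [h₁] at hi
      cases h₂ : L₂.r i with
      | none => rw [h₂] at hi; exact (Bool.false_ne_true hi).elim
      | some v => simp [h₂]

/-- The `k`-labeled incidence graph `L^f` defined by a guard function `f`. -/
def guardKLI (f : GuardF k) : KLI k where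
  I := { R := {i : ℕ // i ∈ f.dom}
         B := {j : Fin k // j ∈ f.img}
         E := fun j i => f.f i.1 = some j.1
         covered := by
           rintro ⟨i, hi⟩
           have hs : (f.f i).isSome := GuardF.mem_dom.mp hi
           have hj : (f.f i).get hs ∈ f.img :=
             GuardF.mem_img.mpr ⟨i, (Option.some_get hs).symm⟩
           exact ⟨⟨(f.f i).get hs, hj⟩, (Option.some_get hs).symm⟩ }
  r := fun i => if h : i ∈ f.dom then some ⟨i, h⟩ else none
  b := fun j => if h : j ∈ f.img then some ⟨j, h⟩ else none
  g := f
  fin_r := by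
    apply f.dom.finite_toSet.subset
    intro i hi
    simp only [Set.mem_setOf_eq] at hi
    by_cases h : i ∈ f.dom
    · simpa using h
    · simp [h] at hi

/-- Applying a transition `f` to `L`. -/
def applyTransition (L : KLI k) (f : GuardF k) : KLI k :=
  (guardKLI f).glue (L.removeB (L.g.img ∩ f.img ∩ L.domB))

end KLI

/-- The class `GLI^k` of guarded `k`-labeled incidence graphs. -/
inductive GLI (k : ℕ) : KLI k → Prop
  | base (L : KLI k) :
      (∀ v : L.I.R, ∃ i, L.r i = some v) →
      (∀ e : L.I.B, ∃ j, L.b j = some e) →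
      (∀ i, (L.r i).isSome ↔ (L.g.f i).isSome) →
      L.realGuards → GLI k L
  | removeR (L : KLI k) (X : Finset ℕ) :
      GLI k L → (∀ i ∈ X, (L.r i).isSome) → GLI k (L.removeR X)
  | removeB (L : KLI k) (X : Finset (Fin k)) :
      GLI k L → (∀ j ∈ X, (L.b j).isSome ∧ j ∉ L.g.img) → GLI k (L.removeB X)
  | trans (L : KLI k) (f : GuardF k) :
      GLI k L → L.g.IsTransition f → GLI k (L.applyTransition f)
  | glue (L L' : KLI k) :
      GLI k L → GLI k L' → GuardF.Compatible L.g L'.g → GLI k (L.glue L')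

/-- Two `k`-labeled incidence graphs are compatible. -/
def KCompatible {k : ℕ} (L L' : KLI k) : Prop :=
  (∀ i, (L.r i).isSome ↔ (L'.r i).isSome) ∧
  (∀ j, (L.b j).isSome ↔ (L'.b j).isSome) ∧ L.g.f = L'.g.f

/-- Homomorphisms between `k`-labeled incidence graphs: they respect the labels
and ignore the guard functions. -/
def KHom {k : ℕ} (L L' : KLI k) : Type :=
  {h : (L.I.R → L'.I.R) × (L.I.B → L'.I.B) //
    (∀ e v, L.I.E e v → L'.I.E (h.2 e) (h.1 v)) ∧
    (∀ i v, L.r i = some v → L'.r i = some (h.1 v)) ∧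
    (∀ j e, L.b j = some e → L'.b j = some (h.2 e))}

/-- The number of homomorphisms between `k`-labeled incidence graphs. -/
def khom {k : ℕ} (L L' : KLI k) : ℕ := Nat.card (KHom L L')

/-! ### Quantum incidence graphs -/

/-- A formal linear combination of `k`-labeled incidence graphs, given as a list
of coefficient/component pairs. -/
abbrev QIG (k : ℕ) := List (ℝ × KLI k)

/-- `Q` is a `k`-labeled quantum incidence graph: it is a nonempty formal linear
combination of pairwise compatible `k`-labeled incidence graphs. -/
def IsQuantum {k : ℕ} (Q : QIG k) : Prop :=
  Q ≠ [] ∧ ∀ p ∈ Q, ∀ q ∈ Q, KCompatible p.2 q.2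

/-- Homomorphism count from a quantum incidence graph. -/
def qhom {k : ℕ} (Q : QIG k) (L : KLI k) : ℝ :=
  (Q.map fun p => p.1 * (khom p.2 L : ℝ)).sum

/-- Glueing of quantum incidence graphs. -/
def qglue {k : ℕ} (Q Q' : QIG k) : QIG k :=
  Q.flatMap fun p => Q'.map fun q => (p.1 * q.1, p.2.glue q.2)

/-- Componentwise removal of red labels. -/
def qremoveR {k : ℕ} (Q : QIG k) (X : Finset ℕ) : QIG k :=
  Q.map fun p => (p.1, p.2.removeR X)

/-- Componentwise removal of blue labels. -/
def qremoveB {k : ℕ} (Q : QIG k) (X : Finset (Fin k)) : QIG k :=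
  Q.map fun p => (p.1, p.2.removeB X)

/-- Componentwise application of a transition. -/
def qapplyTransition {k : ℕ} (Q : QIG k) (f : GuardF k) : QIG k :=
  Q.map fun p => (p.1, p.2.applyTransition f)

/-- Guarded quantum incidence graphs: all components belong to `GLI^k`. -/
def IsQGLI {k : ℕ} (Q : QIG k) : Prop := IsQuantum Q ∧ ∀ p ∈ Q, GLI k p.2

end

/-!
Take an ehd of width at most `k`, root it at a node `ω` with a largest cover and, going down
the tree, pad every cover to `|Cover(ω)|` blue nodes taken from the padded cover of the parent.
Subtrees of a rooted tree are exactly the vertex sets that contain the parent of every vertex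
but their top, and padding only ever adds a blue node `e` below a node whose cover already
contains `e`, so the padded covers still form an ehd; all covers now have the same size, which
makes any rooting monotone. Finally replace every node by a path of copies carrying its bag
and cover, and hang the children one by one below distinct copies: the resulting tree is
binary, and preimages of subtrees are again subtrees.
-/

structure ParentTree (V : Type*) where
  root : V
  parent : V → V
  depth : V → ℕ
  parent_root : parent root = root
  depth_root : depth root = 0
  depth_parent : ∀ v, v ≠ root → depth (parent v) + 1 = depth v

namespace ParentTree

variable {V : Type*} (R : ParentTree V)

def graph : SimpleGraph V := SimpleGraph.fromRel fun u v => R.parent u = v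

def HasTop (S : Set V) (r : V) : Prop :=
  r ∈ S ∧ ∀ v ∈ S, v ≠ r → v ≠ R.root ∧ R.parent v ∈ S

theorem depth_eq_zero_iff {v : V} : R.depth v = 0 ↔ v = R.root := by
  refine ⟨fun h => ?_, fun h => h ▸ R.depth_root⟩
  by_contra hv
  have := R.depth_parent v hv
  omega

theorem parent_ne {v : V} (hv : v ≠ R.root) : R.parent v ≠ v := by
  intro h
  have := R.depth_parent v hv
  rw [h] at this
  omega

theorem induction {P : V → Prop} (root : P R.root)
    (parent : ∀ v, v ≠ R.root → P (R.parent v) → P v) (v : V) : P v := by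
  induction hd : R.depth v generalizing v with
  | zero => exact R.depth_eq_zero_iff.mp hd ▸ root
  | succ d ih =>
    have hv : v ≠ R.root := fun h => by simp [h, R.depth_root] at hd
    exact parent v hv (ih _ (by have := R.depth_parent v hv; omega))

theorem graph_adj {u w : V} :
    R.graph.Adj u w ↔ (u ≠ R.root ∧ R.parent u = w) ∨ (w ≠ R.root ∧ R.parent w = u) := by
  rw [graph, SimpleGraph.fromRel_adj]
  constructor
  · rintro ⟨hne, h | h⟩
    · exact .inl ⟨fun hu => hne (by rw [← h, hu, R.parent_root]), h⟩
    · exact .inr ⟨fun hw => hne (by rw [← h, hw, R.parent_root]), h⟩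
  · rintro (⟨hu, h⟩ | ⟨hw, h⟩)
    · exact ⟨h ▸ (R.parent_ne hu).symm, .inl h⟩
    · exact ⟨h ▸ R.parent_ne hw, .inr h⟩

theorem adj_parent {v : V} (hv : v ≠ R.root) : R.graph.Adj v (R.parent v) :=
  R.graph_adj.mpr (.inl ⟨hv, rfl⟩)

theorem depth_le_depth_add_length {u w : V} (p : R.graph.Walk u w) :
    R.depth w ≤ R.depth u + p.length := by
  induction p with
  | nil => simp
  | @cons u x w h q ih =>
    have := R.depth_parent u
    have := R.depth_parent x
    rcases R.graph_adj.mp h with ⟨hu, rfl⟩ | ⟨hx, rfl⟩ <;> grind [SimpleGraph.Walk.length_cons]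

theorem exists_walk_root (v : V) : ∃ p : R.graph.Walk v R.root, p.length = R.depth v := by
  refine R.induction (P := fun v => ∃ p : R.graph.Walk v R.root, p.length = R.depth v)
    ⟨.nil, by simp [R.depth_root]⟩ (fun v hv ⟨p, hp⟩ => ?_) v
  exact ⟨.cons (R.adj_parent hv) p, by simp [hp, R.depth_parent v hv]⟩

theorem connected_graph : R.graph.Connected := by
  rw [SimpleGraph.connected_iff_exists_forall_reachable]
  exact ⟨R.root, fun v => ⟨(R.exists_walk_root v).choose.reverse⟩⟩

theorem dist_root (v : V) : R.graph.dist R.root v = R.depth v := by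
  obtain ⟨p, hp⟩ := R.exists_walk_root v
  obtain ⟨q, hq⟩ := R.connected_graph.exists_walk_length_eq_dist R.root v
  have := R.depth_le_depth_add_length q
  have := SimpleGraph.dist_le p.reverse
  rw [SimpleGraph.Walk.length_reverse] at this
  rw [R.depth_root] at *
  omega

theorem children_eq (t : V) :
    {c | R.graph.Adj t c ∧ R.graph.dist R.root c = R.graph.dist R.root t + 1} =
      {c | c ≠ R.root ∧ R.parent c = t} := by
  ext c
  simp only [Set.mem_ofPred_eq, dist_root, graph_adj]
  have := R.depth_parent t
  have := R.depth_parent c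
  grind

/-- Edges correspond to non-root vertices via `v ↦ s(v, parent v)`. -/
theorem isTree_graph [Finite V] : R.graph.IsTree := by
  refine SimpleGraph.isTree_iff_connected_and_card.mpr ⟨R.connected_graph, ?_⟩
  let f : ({R.root}ᶜ : Set V) → R.graph.edgeSet := fun v => ⟨s(v, R.parent v), R.adj_parent v.2⟩
  have hf : f.Bijective := by
    refine ⟨fun ⟨a, ha⟩ ⟨b, hb⟩ hab => ?_, fun ⟨e, he⟩ => ?_⟩
    · have hab := congrArg Subtype.val hab
      simp only [f, Sym2.eq_iff] at hab
      rcases hab with ⟨h, -⟩ | ⟨h₁, h₂⟩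
      · exact Subtype.ext h
      · have ha' := R.depth_parent a ha
        have hb' := R.depth_parent b hb
        rw [h₂] at ha'
        rw [← h₁] at hb'
        omega
    · induction e using Sym2.ind with
      | h x y =>
        rcases R.graph_adj.mp he with ⟨hx, hxy⟩ | ⟨hy, hyx⟩
        · exact ⟨⟨x, hx⟩, Subtype.ext (by simp [f, hxy])⟩
        · exact ⟨⟨y, hy⟩, Subtype.ext (by simp [f, hyx, Sym2.eq_swap])⟩
  rw [← Nat.card_congr (Equiv.ofBijective f hf), Nat.card_coe_set_eq, ← Set.ncard_univ,
    Set.compl_eq_univ_sdiff]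
  exact Set.ncard_sdiff_singleton_add_one (Set.mem_univ _)

theorem depth_add_length_of_isPath {u w : V} {p : R.graph.Walk u w} (hp : p.IsPath)
    (hu : R.parent u ∉ p.support) : R.depth u + p.length = R.depth w := by
  induction p with
  | nil => simp
  | @cons u x w h q ih =>
    rw [SimpleGraph.Walk.cons_isPath_iff] at hp
    have hx : R.parent u ≠ x := fun h' => hu (by simp [h'])
    rcases R.graph_adj.mp h with ⟨-, h'⟩ | ⟨hx', rfl⟩
    · exact absurd h' hx
    · have := ih hp.1 hp.2
      have := R.depth_parent x hx'
      simp only [SimpleGraph.Walk.length_cons]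
      omega

variable {R}

theorem HasTop.connected_induce {S : Set V} {r : V} (h : R.HasTop S r) :
    (R.graph.induce S).Connected := by
  rw [SimpleGraph.connected_iff_exists_forall_reachable]
  refine ⟨⟨r, h.1⟩, fun ⟨v, hv⟩ => ?_⟩
  suffices ∀ v (hv : v ∈ S), (R.graph.induce S).Reachable ⟨v, hv⟩ ⟨r, h.1⟩ from (this v hv).symm
  refine R.induction (fun hv => ?_) (fun v hvr ih hv => ?_)
  · by_cases hr : R.root = r
    · subst hr; rfl
    · exact absurd rfl (h.2 _ hv hr).1
  · by_cases hr : v = r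
    · subst hr; rfl
    · obtain ⟨-, hp⟩ := h.2 v hv hr
      exact (show (R.graph.induce S).Adj ⟨v, hv⟩ ⟨_, hp⟩ from R.adj_parent hvr).reachable.trans
        (ih hp)

/-- The top is a vertex of minimal depth, and a path inside `S` from any other vertex to it
must start at the parent. -/
theorem exists_hasTop_of_connected {S : Set V} (hS : (R.graph.induce S).Connected) :
    ∃ r, R.HasTop S r := by
  classical
  obtain ⟨⟨r₀, hr₀⟩⟩ := hS.nonempty
  obtain ⟨r, hr, hmin⟩ := (measure R.depth).wf.has_min S ⟨r₀, hr₀⟩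
  refine ⟨r, hr, fun v hv hvr => ?_⟩
  have hrv : R.depth r ≤ R.depth v := not_lt.mp (hmin v hv)
  obtain ⟨p⟩ := hS.preconnected ⟨v, hv⟩ ⟨r, hr⟩
  obtain ⟨q, hq, hqS⟩ : ∃ q : R.graph.Walk v r, q.IsPath ∧ ∀ x ∈ q.support, x ∈ S := by
    let p' := p.map (SimpleGraph.Embedding.induce S).toHom
    have hp'S : ∀ x ∈ p'.support, x ∈ S := by
      intro x hx
      rw [SimpleGraph.Walk.support_map] at hx
      obtain ⟨y, -, rfl⟩ := List.mem_map.mp hx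
      exact y.2
    exact ⟨p'.bypass, p'.bypass_isPath, fun x hx => hp'S x (p'.support_bypass_subset_support hx)⟩
  have hlen : 0 < q.length := Nat.pos_of_ne_zero fun h => hvr (q.eq_of_length_eq_zero h)
  have hpar : R.parent v ∈ q.support := by
    by_contra hnot
    have := R.depth_add_length_of_isPath hq hnot
    omega
  refine ⟨fun hv0 => hvr ?_, hqS _ hpar⟩
  rw [hv0, R.depth_root] at hrv
  rw [hv0, (R.depth_eq_zero_iff.mp (by omega) : r = R.root)]

theorem HasTop.mono {S S' : Set V} {r : V} (h : R.HasTop S r) (hSS' : S ⊆ S')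
    (hS' : ∀ v ∈ S', v ∉ S → v ≠ R.root ∧ R.parent v ∈ S') : R.HasTop S' r := by
  refine ⟨hSS' h.1, fun v hv hvr => ?_⟩
  by_cases hvS : v ∈ S
  · exact (h.2 v hvS hvr).imp_right (hSS' ·)
  · exact hS' v hv hvS

end ParentTree

namespace SimpleGraph.IsTree

variable {V : Type*} {G : SimpleGraph V}

theorem exists_adj_dist_add_one (hG : G.IsTree) (ω : V) {v : V} (hv : v ≠ ω) :
    ∃ u, G.Adj v u ∧ G.dist ω u + 1 = G.dist ω v := by
  obtain ⟨p, hp⟩ := hG.connected.exists_walk_length_eq_dist v ω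
  have hnil : ¬p.Nil := fun h => hv h.eq
  have hadj := p.adj_snd hnil
  have hle := dist_le p.tail
  have := p.length_tail_add_one hnil
  rw [dist_comm] at hp hle
  have := hG.dist_eq_dist_add_one_of_adj ω hadj
  exact ⟨p.snd, hadj, by omega⟩

/-- Both are the penultimate vertex of a shortest path from `ω` to `v`. -/
theorem eq_of_adj_of_dist_add_one (hG : G.IsTree) (ω : V) {v u u' : V} (hu : G.Adj v u)
    (hu' : G.Adj v u') (hdu : G.dist ω u + 1 = G.dist ω v)
    (hdu' : G.dist ω u' + 1 = G.dist ω v) : u = u' := by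
  classical
  obtain ⟨q, hq, hqlen⟩ := hG.connected.exists_path_of_dist ω v
  suffices key : ∀ x, G.Adj v x → G.dist ω x + 1 = G.dist ω v → x = q.penultimate from
    (key u hu hdu).trans (key u' hu' hdu').symm
  intro x hx hdx
  obtain ⟨p, hp, hplen⟩ := hG.connected.exists_path_of_dist ω x
  refine hG.isAcyclic.eq_penultimate_of_adj_end hq hx (by_contra fun hxq => ?_)
  have hvp := hG.isAcyclic.mem_support_of_ne_mem_support_of_adj_of_isPath hp hq hx.symm hxq
  have := dist_le (p.takeUntil v hvp)
  have := p.length_takeUntil_le_length hvp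
  omega

open Classical in
noncomputable def parentTree (hG : G.IsTree) (ω : V) : ParentTree V where
  root := ω
  parent v := if hv : v = ω then ω else (hG.exists_adj_dist_add_one ω hv).choose
  depth := G.dist ω
  parent_root := dif_pos rfl
  depth_root := dist_self
  depth_parent v hv := by
    rw [dif_neg hv]
    exact (hG.exists_adj_dist_add_one ω hv).choose_spec.2

theorem adj_parent_parentTree (hG : G.IsTree) (ω : V) {v : V} (hv : v ≠ ω) :
    G.Adj v ((hG.parentTree ω).parent v) := by
  simp only [parentTree, dif_neg hv]
  exact (hG.exists_adj_dist_add_one ω hv).choose_spec.1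

theorem graph_parentTree (hG : G.IsTree) (ω : V) : (hG.parentTree ω).graph = G := by
  ext u w
  have hroot {x : V} (hx : 0 < G.dist ω x) : x ≠ (hG.parentTree ω).root := by
    rintro rfl
    exact (lt_irrefl _ (dist_self (G := G) ▸ hx))
  rw [ParentTree.graph_adj]
  constructor
  · rintro (⟨hu, rfl⟩ | ⟨hw, rfl⟩)
    · exact hG.adj_parent_parentTree ω hu
    · exact (hG.adj_parent_parentTree ω hw).symm
  · intro h
    rcases hG.dist_eq_dist_add_one_of_adj ω h with hd | hd
    · have hu := hroot (x := u) (by omega)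
      exact .inl ⟨hu, hG.eq_of_adj_of_dist_add_one ω (hG.adj_parent_parentTree ω hu) h
        ((hG.parentTree ω).depth_parent u hu) hd.symm⟩
    · have hw := hroot (x := w) (by omega)
      exact .inr ⟨hw, hG.eq_of_adj_of_dist_add_one ω (hG.adj_parent_parentTree ω hw) h.symm
        ((hG.parentTree ω).depth_parent w hw) hd.symm⟩

end SimpleGraph.IsTree

namespace ParentTree

variable {V : Type*} (R : ParentTree V) {n : ℕ} (f : V ↪ Fin n)

open Classical in
/-- The depth of the top copy `(v, 0)` of `v` in `R.binarize f`. -/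
noncomputable def binarizeDepth (v : V) : ℕ :=
  if hv : v = R.root then 0 else binarizeDepth (R.parent v) + f v + 2
termination_by R.depth v
decreasing_by have := R.depth_parent v hv; omega

theorem binarizeDepth_of_ne {v : V} (hv : v ≠ R.root) :
    R.binarizeDepth f v = R.binarizeDepth f (R.parent v) + f v + 2 := by
  rw [binarizeDepth, dif_neg hv]

open Classical in
/-- Every vertex `v` is replaced by a chain `(v, 0), (v, 1), …, (v, n)` hanging from `(v, 0)`,
and the chain of a child `c` of `v` hangs from `(v, f c + 1)`. As `f` is injective, `(v, i)` has
at most two children: `(v, i + 1)` and the top of one chain. -/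
noncomputable def binarize : ParentTree (V × Fin (n + 1)) where
  root := (R.root, 0)
  parent x := Fin.cases (if x.1 = R.root then x else (R.parent x.1, (f x.1).succ))
    (fun i => (x.1, i.castSucc)) x.2
  depth x := R.binarizeDepth f x.1 + x.2
  parent_root := by simp
  depth_root := by simp [binarizeDepth]
  depth_parent := by
    rintro ⟨v, j⟩ hx
    cases j using Fin.cases with
    | zero =>
      have hv : v ≠ R.root := fun h => hx (by rw [h])
      simp only [hv, ↓reduceIte, Fin.cases_zero, Fin.val_succ, R.binarizeDepth_of_ne f hv,
        Fin.coe_ofNat_eq_mod, Nat.zero_mod, add_zero]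
      omega
    | succ i =>
      simp only [Fin.cases_succ, Fin.val_castSucc, Fin.val_succ]
      omega

theorem binarize_parent_zero {v : V} (hv : v ≠ R.root) :
    (R.binarize f).parent (v, 0) = (R.parent v, (f v).succ) := by
  simp [binarize, hv]

theorem binarize_parent_succ (v : V) (i : Fin n) :
    (R.binarize f).parent (v, i.succ) = (v, i.castSucc) := by
  simp [binarize]

theorem ncard_children_binarize_le (x : V × Fin (n + 1)) :
    {c | c ≠ (R.binarize f).root ∧ (R.binarize f).parent c = x}.ncard ≤ 2 := by
  suffices hinj : Set.InjOn (fun c : V × Fin (n + 1) => decide (c.2 = 0))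
      {c | c ≠ (R.binarize f).root ∧ (R.binarize f).parent c = x} by
    simpa using Set.ncard_le_ncard_of_injOn _ (fun _ _ => Set.mem_univ _) hinj
  rintro ⟨v, j⟩ ⟨hv, rfl⟩ ⟨w, k⟩ ⟨hw, hvw⟩ hjk
  cases j using Fin.cases with
  | zero =>
    cases k using Fin.cases with
    | zero =>
      have hv' : v ≠ R.root := fun h => hv (by rw [h]; rfl)
      have hw' : w ≠ R.root := fun h => hw (by rw [h]; rfl)
      rw [R.binarize_parent_zero f hv', R.binarize_parent_zero f hw'] at hvw
      simp only [Prod.mk.injEq, Fin.succ_inj] at hvw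
      rw [f.injective hvw.2]
    | succ k => simp at hjk
  | succ i =>
    cases k using Fin.cases with
    | zero => simp at hjk
    | succ k =>
      rw [R.binarize_parent_succ f, R.binarize_parent_succ f] at hvw
      simp only [Prod.mk.injEq, Fin.castSucc_inj] at hvw
      rw [hvw.1, hvw.2]

variable {R}

theorem HasTop.binarize {S : Set V} {r : V} (h : R.HasTop S r) :
    (R.binarize f).HasTop (Prod.fst ⁻¹' S) (r, 0) := by
  refine ⟨h.1, ?_⟩
  rintro ⟨v, j⟩ hv hvr
  cases j using Fin.cases with
  | zero =>
    obtain ⟨hroot, hpar⟩ := h.2 v hv fun h => hvr (by rw [h])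
    refine ⟨fun h => hroot (congrArg Prod.fst h), ?_⟩
    rw [R.binarize_parent_zero f hroot]
    exact hpar
  | succ i =>
    refine ⟨fun h => Fin.succ_ne_zero i (congrArg Prod.snd h), ?_⟩
    rw [R.binarize_parent_succ f]
    exact hv

end ParentTree

namespace Set

variable {α : Type*}

open Classical in
/-- `A` enlarged to exactly `m` elements by elements of `B`, or `A` itself if that is
impossible. -/
noncomputable def padWith (m : ℕ) (A B : Set α) : Set α :=
  if h : ∃ Y, A ⊆ Y ∧ Y ⊆ A ∪ B ∧ Y.ncard = m then h.choose else A

theorem subset_padWith (m : ℕ) (A B : Set α) : A ⊆ padWith m A B := by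
  unfold padWith
  split_ifs with h
  exacts [h.choose_spec.1, subset_rfl]

theorem padWith_subset (m : ℕ) (A B : Set α) : padWith m A B ⊆ A ∪ B := by
  unfold padWith
  split_ifs with h
  exacts [h.choose_spec.2.1, subset_union_left]

theorem ncard_padWith [Finite α] {m : ℕ} {A B : Set α} (hA : A.ncard ≤ m) (hB : m ≤ B.ncard) :
    (padWith m A B).ncard = m := by
  have h : ∃ Y, A ⊆ Y ∧ Y ⊆ A ∪ B ∧ Y.ncard = m :=
    exists_subsuperset_card_eq subset_union_left hA (hB.trans (ncard_le_ncard subset_union_right))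
  rw [padWith, dif_pos h]
  exact h.choose_spec.2.2

end Set

namespace ParentTree

variable {V α : Type*} (R : ParentTree V) (C : V → Set α) (m : ℕ)

open Classical in
noncomputable def pad (v : V) : Set α :=
  if _hv : v = R.root then C v else (C v).padWith m (pad (R.parent v))
termination_by R.depth v
decreasing_by have := R.depth_parent v _hv; omega

theorem pad_root : R.pad C m R.root = C R.root := by
  rw [pad, dif_pos rfl]

theorem pad_of_ne {v : V} (hv : v ≠ R.root) :
    R.pad C m v = (C v).padWith m (R.pad C m (R.parent v)) := by
  rw [pad, dif_neg hv]

theorem subset_pad (v : V) : C v ⊆ R.pad C m v := by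
  by_cases hv : v = R.root
  · rw [hv, pad_root]
  · rw [R.pad_of_ne C m hv]
    exact Set.subset_padWith _ _ _

theorem pad_subset {v : V} (hv : v ≠ R.root) : R.pad C m v ⊆ C v ∪ R.pad C m (R.parent v) := by
  rw [R.pad_of_ne C m hv]
  exact Set.padWith_subset _ _ _

theorem ncard_pad [Finite α] (hC : ∀ v, (C v).ncard ≤ m) (hroot : (C R.root).ncard = m) (v : V) :
    (R.pad C m v).ncard = m := by
  refine R.induction (P := fun v => (R.pad C m v).ncard = m) (by rwa [pad_root])
    (fun v hv ih => ?_) v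
  rw [R.pad_of_ne C m hv]
  exact Set.ncard_padWith (hC v) ih.ge

variable {R C}

theorem HasTop.pad (P : α → Prop) {r : V}
    (h : R.HasTop {v | ∃ a ∈ C v, P a} r) : R.HasTop {v | ∃ a ∈ R.pad C m v, P a} r := by
  refine h.mono (fun v ⟨a, ha, hPa⟩ => ⟨a, R.subset_pad C m v ha, hPa⟩) ?_
  rintro v ⟨a, ha, hPa⟩ hv
  have hroot : v ≠ R.root := fun h => hv ⟨a, by rwa [h, pad_root, ← h] at ha, hPa⟩
  refine ⟨hroot, a, ?_, hPa⟩
  exact (R.pad_subset C m hroot ha).resolve_left fun h => hv ⟨a, h, hPa⟩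

end ParentTree

namespace EHD

variable {I : IncGraph}

/-- The EHD with tree `G` and covers `C`; the bags are forced by precise coverage. -/
def ofCover {T : Type} [Finite T] (G : SimpleGraph T) (hG : G.IsTree) (C : T → Set I.B)
    (hC : ∀ e, ∃ t, e ∈ C t)
    (hB : ∀ e, (G.induce {t | ∃ e' ∈ C t, e' = e}).Connected)
    (hR : ∀ v, (G.induce {t | ∃ e ∈ C t, I.E e v}).Connected) : EHD I where
  T := T
  tr := G
  isTree := hG
  Bag t := ⋃ e ∈ C t, I.nbhd e
  Cover := C
  complete e := (hC e).imp fun _ ht => ⟨Set.subset_biUnion_of_mem ht, ht⟩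
  connR v := by
    have h : {t | v ∈ ⋃ e ∈ C t, I.nbhd e} = {t | ∃ e ∈ C t, I.E e v} := by
      ext; simp [IncGraph.nbhd]
    rw [h]
    exact hR v
  covering _ := subset_rfl
  precise _ := rfl
  connB e := by
    have h : {t | e ∈ C t} = {t | ∃ e' ∈ C t, e' = e} := by ext; simp
    rw [h]
    exact hB e

theorem connected_cover_eq (D : EHD I) (e : I.B) :
    (D.tr.induce {t | ∃ e' ∈ D.Cover t, e' = e}).Connected := by
  have h : {t | ∃ e' ∈ D.Cover t, e' = e} = {t | e ∈ D.Cover t} := by ext; simp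
  rw [h]
  exact D.connB e

theorem connected_cover_adj (D : EHD I) (v : I.R) :
    (D.tr.induce {t | ∃ e ∈ D.Cover t, I.E e v}).Connected := by
  have h : {t | ∃ e ∈ D.Cover t, I.E e v} = {t | v ∈ D.Bag t} := by
    ext; simp [← D.precise, IncGraph.nbhd]
  rw [h]
  exact D.connR v

theorem exists_ncard_cover_eq {k : ℕ} (hI : I ∈ IEHW k) :
    ∃ (D : EHD I) (m : ℕ), m ≤ k ∧ ∀ t, (D.Cover t).ncard = m := by
  obtain ⟨D, hw⟩ := hI
  have := D.isTree.connected.nonempty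
  obtain ⟨ω, hω⟩ := Finite.exists_max fun t => (D.Cover t).ncard
  set R := D.isTree.parentTree ω
  set m := (D.Cover ω).ncard
  have transfer (P : I.B → Prop) (hP : (D.tr.induce {t | ∃ e ∈ D.Cover t, P e}).Connected) :
      (D.tr.induce {t | ∃ e ∈ R.pad D.Cover m t, P e}).Connected := by
    rw [← D.isTree.graph_parentTree ω] at hP ⊢
    obtain ⟨r, hr⟩ := R.exists_hasTop_of_connected hP
    exact (hr.pad m P).connected_induce
  refine ⟨ofCover D.tr D.isTree (R.pad D.Cover m) (fun e => ?_)
    (fun e => transfer _ (D.connected_cover_eq e)) (fun v => transfer _ (D.connected_cover_adj v)),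
    m, hw ω, R.ncard_pad D.Cover m hω rfl⟩
  obtain ⟨t, -, he⟩ := D.complete e
  exact ⟨t, R.subset_pad D.Cover m t he⟩

theorem exists_binary_reusing_covers (D : EHD I) : ∃ (D' : EHD I) (ω : D'.T),
    (∀ t, {c | D'.tr.Adj t c ∧ D'.tr.dist ω c = D'.tr.dist ω t + 1}.ncard ≤ 2) ∧
      ∀ t, ∃ s, D'.Cover t = D.Cover s := by
  obtain ⟨ω⟩ := D.isTree.connected.nonempty
  set R := D.isTree.parentTree ω
  set f := (Finite.equivFin D.T).toEmbedding
  set R' := R.binarize f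
  have transfer (P : I.B → Prop) (hP : (D.tr.induce {t | ∃ e ∈ D.Cover t, P e}).Connected) :
      (R'.graph.induce {x | ∃ e ∈ D.Cover x.1, P e}).Connected := by
    rw [← D.isTree.graph_parentTree ω] at hP
    obtain ⟨r, hr⟩ := R.exists_hasTop_of_connected hP
    exact (hr.binarize f).connected_induce
  refine ⟨ofCover R'.graph R'.isTree_graph (fun x => D.Cover x.1) (fun e => ?_)
    (fun e => transfer _ (D.connected_cover_eq e)) (fun v => transfer _ (D.connected_cover_adj v)),
    R'.root, fun x : D.T × Fin _ => ?_, fun x => ⟨x.1, rfl⟩⟩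
  · obtain ⟨t, -, he⟩ := D.complete e
    exact ⟨(t, 0), he⟩
  · show {c | R'.graph.Adj x c ∧ R'.graph.dist R'.root c = R'.graph.dist R'.root x + 1}.ncard ≤ 2
    rw [R'.children_eq]
    exact R.ncard_children_binarize_le f x

end EHD

/-- Every `I ∈ IEHW_k` has an entangled hypertree decomposition
`D` with a root `ω` with `|Cover(ω)| ≤ k` such that the tree rooted at `ω` is binary
(every node has at most two children) and monotone (covers do not grow from parent
to child). -/
theorem exists_binary_monotone_ehd (k : ℕ) (I : IncGraph) (hI : I ∈ IEHW k) :
    ∃ (D : EHD I) (ω : D.T), (D.Cover ω).ncard ≤ k ∧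
      (∀ t : D.T, {c | D.tr.Adj t c ∧ D.tr.dist ω c = D.tr.dist ω t + 1}.ncard ≤ 2) ∧
      (∀ tp tc : D.T, D.tr.Adj tp tc → D.tr.dist ω tc = D.tr.dist ω tp + 1 →
        (D.Cover tc).ncard ≤ (D.Cover tp).ncard) := by
  obtain ⟨D, m, hmk, hm⟩ := EHD.exists_ncard_cover_eq hI
  obtain ⟨D', ω, hbinary, hcover⟩ := D.exists_binary_reusing_covers
  have hm' (t : D'.T) : (D'.Cover t).ncard = m := by
    obtain ⟨s, hs⟩ := hcover t
    rw [hs, hm]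
  exact ⟨D', ω, (hm' ω).trans_le hmk, hbinary, fun tp tc _ _ => ((hm' tc).trans (hm' tp).symm).le⟩
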